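/- arXiv:2302.01244 — 3 statements merged into one kernel-verified Lean document; each statement's English description precedes it below -/
import Mathlib

section
/- Let Z and S be measurable spaces, ρ a probability measure on Z, P and P̂ Markov kernels from Z to S, r : Z → ℝ a measurable reward function, γ ∈ [0,1) a discount factor, and V : S → ℝ a bounded measurable function. Define the Bellman targets T(z) = r(z) + γ ∫ V d(P z) and T̂(z) = r(z) + γ ∫ V d(P̂ z). Then the value-aware model error satisfies ∫_Z (T(z) − T̂(z))² dρ(z) = γ² ∫_Z (∫ V d(P z) − ∫ V d(P̂ z))² dρ(z) ≤ γ² ∫_Z ∫_S ∫_S (V(y) − V(x))² d(P̂ z)(y) d(P z)(x) dρ(z). -/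
open MeasureTheory ProbabilityTheory

lemma sq_integral_le_integral_sq {α : Type*} [MeasurableSpace α] {μ : Measure α}
    [IsProbabilityMeasure μ] {h : α → ℝ} (hm : Measurable h) {C : ℝ}
    (hb : ∀ a, |h a| ≤ C) : (∫ a, h a ∂μ) ^ 2 ≤ ∫ a, (h a) ^ 2 ∂μ := by
  have hmem : MemLp h 2 μ :=
    (memLp_top_of_bound hm.aestronglyMeasurable C (Filter.Eventually.of_forall fun a => by
      simpa using hb a)).mono_exponent le_top
  have h1 := variance_nonneg h μ
  rw [variance_eq_sub hmem] at h1
  have : (∫ a, (h ^ 2) a ∂μ) = ∫ a, (h a) ^ 2 ∂μ := by simp [Pi.pow_apply]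
  linarith [h1, this.symm ▸ h1]

/-- The value-aware model error equals `γ²` times the mean squared difference of the
next-state value expectations under the true and learned kernels, and is bounded by the
`γ²`-weighted doubly-integrated squared value discrepancy. -/
theorem value_aware_model_error_bound
    {Z S : Type*} [MeasurableSpace Z] [MeasurableSpace S]
    (ρ : Measure Z) [IsProbabilityMeasure ρ]
    (P Phat : Kernel Z S) [IsMarkovKernel P] [IsMarkovKernel Phat]
    (r : Z → ℝ) (hr : Measurable r)
    (γ : ℝ) (hγ0 : 0 ≤ γ) (hγ1 : γ < 1)
    (V : S → ℝ) (hV : Measurable V) (M : ℝ) (hVb : ∀ s, |V s| ≤ M)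
    (T That : Z → ℝ)
    (hT : ∀ z, T z = r z + γ * ∫ s, V s ∂(P z))
    (hThat : ∀ z, That z = r z + γ * ∫ s, V s ∂(Phat z)) :
    (∫ z, (T z - That z) ^ 2 ∂ρ
        = γ ^ 2 * ∫ z, ((∫ s, V s ∂(P z)) - ∫ s, V s ∂(Phat z)) ^ 2 ∂ρ) ∧
    γ ^ 2 * (∫ z, ((∫ s, V s ∂(P z)) - ∫ s, V s ∂(Phat z)) ^ 2 ∂ρ)
        ≤ γ ^ 2 * ∫ z, ∫ x, ∫ y, (V y - V x) ^ 2 ∂(Phat z) ∂(P z) ∂ρ := by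
  -- the squared-difference function on S × S
  set W : S × S → ℝ := fun p => (V p.2 - V p.1) ^ 2 with hW
  have hWm : Measurable W := ((hV.comp measurable_snd).sub (hV.comp measurable_fst)).pow_const 2
  -- pointwise Jensen bound
  have key : ∀ z : Z,
      ((∫ s, V s ∂(P z)) - ∫ s, V s ∂(Phat z)) ^ 2
        ≤ ∫ x, ∫ y, (V y - V x) ^ 2 ∂(Phat z) ∂(P z) := by
    intro z
    set μ : Measure (S × S) := (P z).prod (Phat z) with hμ
    have : IsProbabilityMeasure μ := by rw [hμ]; infer_instance
    have hfm : Measurable fun p : S × S => V p.1 - V p.2 :=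
      (hV.comp measurable_fst).sub (hV.comp measurable_snd)
    have hMnn : 0 ≤ M := le_trans (abs_nonneg _)
      (hVb (Classical.choice (P z).nonempty_of_neZero))
    have hfb : ∀ p : S × S, |V p.1 - V p.2| ≤ 2 * M := fun p => by
      calc |V p.1 - V p.2| ≤ |V p.1| + |V p.2| := abs_sub _ _
        _ ≤ M + M := add_le_add (hVb _) (hVb _)
        _ = 2 * M := by ring
    have hint1 : Integrable (fun p : S × S => V p.1) μ := by
      refine ⟨(hV.comp measurable_fst).aestronglyMeasurable, ?_⟩
      exact HasFiniteIntegral.of_bounded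
        (Filter.Eventually.of_forall fun p => by simpa using hVb p.1)
    have hint2 : Integrable (fun p : S × S => V p.2) μ := by
      refine ⟨(hV.comp measurable_snd).aestronglyMeasurable, ?_⟩
      exact HasFiniteIntegral.of_bounded
        (Filter.Eventually.of_forall fun p => by simpa using hVb p.2)
    have hWint : Integrable W μ := by
      refine ⟨hWm.aestronglyMeasurable, ?_⟩
      refine HasFiniteIntegral.of_bounded (C := (2*M)^2)
        (Filter.Eventually.of_forall fun p => ?_)
      have := hfb (p.2, p.1)
      rw [Real.norm_eq_abs, abs_of_nonneg (sq_nonneg _)]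
      calc (V p.2 - V p.1) ^ 2 = |V p.2 - V p.1| ^ 2 := (sq_abs _).symm
        _ ≤ (2*M) ^ 2 := pow_le_pow_left₀ (abs_nonneg _) (by simpa using this) 2
    have hmean : (∫ p, (V p.1 - V p.2) ∂μ)
        = (∫ s, V s ∂(P z)) - ∫ s, V s ∂(Phat z) := by
      rw [integral_sub hint1 hint2]
      congr 1
      · rw [hμ, MeasureTheory.integral_prod _ hint1]
        simp
      · rw [hμ, MeasureTheory.integral_prod _ hint2]
        simp
    calc ((∫ s, V s ∂(P z)) - ∫ s, V s ∂(Phat z)) ^ 2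
        = (∫ p, (V p.1 - V p.2) ∂μ) ^ 2 := by rw [hmean]
      _ ≤ ∫ p, (V p.1 - V p.2) ^ 2 ∂μ :=
          sq_integral_le_integral_sq hfm hfb
      _ = ∫ p, W p ∂μ := by
          refine integral_congr_ae (Filter.Eventually.of_forall fun p => ?_)
          simp only [hW]; ring
      _ = ∫ x, ∫ y, (V y - V x) ^ 2 ∂(Phat z) ∂(P z) := by
          rw [hμ, MeasureTheory.integral_prod _ hWint]
  constructor
  · -- equality part
    have : ∀ z, (T z - That z) ^ 2
        = γ ^ 2 * ((∫ s, V s ∂(P z)) - ∫ s, V s ∂(Phat z)) ^ 2 := by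
      intro z; rw [hT z, hThat z]; ring
    rw [integral_congr_ae (Filter.Eventually.of_forall this), integral_const_mul]
  · -- inequality part
    refine mul_le_mul_of_nonneg_left ?_ (sq_nonneg γ)
    -- the RHS integrand, expressed via the product kernel
    have hrw : ∀ z, (∫ x, ∫ y, (V y - V x) ^ 2 ∂(Phat z) ∂(P z))
        = ∫ p, W p ∂((P ×ₖ Phat) z) := by
      intro z
      rw [Kernel.prod_apply]
      have hWint : Integrable W ((P z).prod (Phat z)) := by
        refine ⟨hWm.aestronglyMeasurable, ?_⟩
        have hMnn : 0 ≤ M := le_trans (abs_nonneg _)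
          (hVb (Classical.choice (P z).nonempty_of_neZero))
        refine HasFiniteIntegral.of_bounded (C := (2*M)^2)
          (Filter.Eventually.of_forall fun p => ?_)
        have hfb : |V p.2 - V p.1| ≤ 2 * M := by
          calc |V p.2 - V p.1| ≤ |V p.2| + |V p.1| := abs_sub _ _
            _ ≤ M + M := add_le_add (hVb _) (hVb _)
            _ = 2 * M := by ring
        rw [Real.norm_eq_abs, abs_of_nonneg (sq_nonneg _)]
        calc (V p.2 - V p.1) ^ 2 = |V p.2 - V p.1| ^ 2 := (sq_abs _).symm
          _ ≤ (2*M) ^ 2 := pow_le_pow_left₀ (abs_nonneg _) hfb 2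
      rw [MeasureTheory.integral_prod _ hWint]
    have hgm : AEStronglyMeasurable
        (fun z => ∫ x, ∫ y, (V y - V x) ^ 2 ∂(Phat z) ∂(P z)) ρ := by
      have : StronglyMeasurable fun z => ∫ p, W p ∂((P ×ₖ Phat) z) :=
        (hWm.comp measurable_snd).stronglyMeasurable.integral_kernel_prod_right'
          (κ := P ×ₖ Phat)
      refine (this.aestronglyMeasurable).congr
        (Filter.Eventually.of_forall fun z => (hrw z).symm)
    refine integral_mono_of_nonneg
      (Filter.Eventually.of_forall fun z => sq_nonneg _) ?_
      (Filter.Eventually.of_forall key)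
    refine ⟨hgm, ?_⟩
    -- bound the RHS integrand by a constant
    have hZne : Nonempty Z := by
      by_contra h
      rw [not_nonempty_iff] at h
      have := measure_univ (μ := ρ)
      simp [Set.univ_eq_empty_iff.mpr h] at this
    have hMnn : 0 ≤ M := le_trans (abs_nonneg _)
      (hVb (Classical.choice (P (Classical.choice hZne)).nonempty_of_neZero))
    refine HasFiniteIntegral.of_bounded (C := (2*M)^2)
      (Filter.Eventually.of_forall fun z => ?_)
    have hnn : 0 ≤ ∫ x, ∫ y, (V y - V x) ^ 2 ∂(Phat z) ∂(P z) :=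
      integral_nonneg fun x => integral_nonneg fun y => sq_nonneg _
    rw [Real.norm_eq_abs, abs_of_nonneg hnn]
    calc (∫ x, ∫ y, (V y - V x) ^ 2 ∂(Phat z) ∂(P z))
          ≤ ∫ x, (2*M)^2 ∂(P z) := by
            refine integral_mono_of_nonneg
              (Filter.Eventually.of_forall fun x => integral_nonneg fun y => sq_nonneg _)
              (integrable_const _)
              (Filter.Eventually.of_forall fun x => ?_)
            calc (∫ y, (V y - V x) ^ 2 ∂(Phat z))
                ≤ ∫ y, (2*M)^2 ∂(Phat z) := by
                  refine integral_mono_of_nonneg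
                    (Filter.Eventually.of_forall fun y => sq_nonneg _)
                    (integrable_const _)
                    (Filter.Eventually.of_forall fun y => ?_)
                  have hfb : |V y - V x| ≤ 2 * M := by
                    calc |V y - V x| ≤ |V y| + |V x| := abs_sub _ _
                      _ ≤ M + M := add_le_add (hVb _) (hVb _)
                      _ = 2 * M := by ring
                  calc (V y - V x) ^ 2 = |V y - V x| ^ 2 := (sq_abs _).symm
                    _ ≤ (2*M) ^ 2 := pow_le_pow_left₀ (abs_nonneg _) hfb 2
              _ = (2*M)^2 := by simp
          _ = (2*M)^2 := by simp
end

section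
/- Let Z be a measurable space, ρ a probability measure on Z, f : Z → ℝⁿ a measurable map (a deterministic environment transition), κ a Markov kernel from Z to ℝⁿ (a learned transition model), and V : ℝⁿ → ℝ a measurable function with 0 ≤ V(x) ≤ M for all x, where M ≥ 0. Let ε > 0 and L ≥ 0, and suppose that for ρ-almost every z ∈ Z and every y in the closed Euclidean ball of radius 2ε centered at f(z), one has |V(y) − V(f(z))| ≤ L‖y − f(z)‖₂. Set p = ∫_Z κ(z)({y : ‖y − f(z)‖₂ ≤ 2ε}) dρ(z). Then ∫_Z (∫ V d(κ z) − V(f(z)))² dρ(z) ≤ 4ε²L²·p + M²·(1 − p). -/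
open MeasureTheory ProbabilityTheory

/-- Local-Lipschitz split bound on the value-aware model error for a deterministic
environment transition `f` and a learned model `κ`. -/
theorem value_error_local_lipschitz_split
    {Z : Type*} [MeasurableSpace Z] {n : ℕ}
    (ρ : Measure Z) [IsProbabilityMeasure ρ]
    (f : Z → EuclideanSpace ℝ (Fin n)) (hf : Measurable f)
    (κ : Kernel Z (EuclideanSpace ℝ (Fin n))) [IsMarkovKernel κ]
    (V : EuclideanSpace ℝ (Fin n) → ℝ) (hV : Measurable V)
    (M : ℝ) (hM : 0 ≤ M) (hVb : ∀ x, 0 ≤ V x ∧ V x ≤ M)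
    (ε L : ℝ) (hε : 0 < ε) (hL : 0 ≤ L)
    (hLip : ∀ᵐ z ∂ρ, ∀ y ∈ Metric.closedBall (f z) (2 * ε),
      |V y - V (f z)| ≤ L * ‖y - f z‖)
    (p : ℝ)
    (hp : p = ∫ z, ((κ z) (Metric.closedBall (f z) (2 * ε))).toReal ∂ρ) :
    ∫ z, ((∫ y, V y ∂(κ z)) - V (f z)) ^ 2 ∂ρ
      ≤ 4 * ε ^ 2 * L ^ 2 * p + M ^ 2 * (1 - p) := by
  set q : Z → ℝ := fun z => ((κ z) (Metric.closedBall (f z) (2 * ε))).toReal with hq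
  -- measurability of q
  have hs : MeasurableSet {w : Z × EuclideanSpace ℝ (Fin n) | ‖w.2 - f w.1‖ ≤ 2 * ε} := by
    apply measurableSet_le
    · exact (measurable_snd.sub (hf.comp measurable_fst)).norm
    · exact measurable_const
  have hqm : Measurable q := by
    have h := Kernel.measurable_kernel_prodMk_left (κ := κ) hs
    have : (fun z => (κ z) (Prod.mk z ⁻¹' {w : Z × EuclideanSpace ℝ (Fin n) | ‖w.2 - f w.1‖ ≤ 2 * ε})) = fun z => (κ z) (Metric.closedBall (f z) (2 * ε)) := by
      funext z
      congr 1
    rw [this] at h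
    exact h.ennreal_toReal
  have hq01 : ∀ z, 0 ≤ q z ∧ q z ≤ 1 := by
    intro z
    refine ⟨ENNReal.toReal_nonneg, ?_⟩
    have : (κ z) (Metric.closedBall (f z) (2 * ε)) ≤ 1 := prob_le_one
    calc q z ≤ (1 : ENNReal).toReal := ENNReal.toReal_mono ENNReal.one_ne_top this
      _ = 1 := by simp
  -- pointwise a.e. bound
  have hpt : ∀ᵐ z ∂ρ, ((∫ y, V y ∂(κ z)) - V (f z)) ^ 2
      ≤ 4 * ε ^ 2 * L ^ 2 * q z + M ^ 2 * (1 - q z) := by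
    filter_upwards [hLip] with z hz
    set μ := κ z
    set B := Metric.closedBall (f z) (2 * ε) with hB
    have hBm : MeasurableSet B := measurableSet_closedBall
    have hVint : Integrable V μ := by
      refine Integrable.mono' (integrable_const M) hV.aestronglyMeasurable ?_
      filter_upwards with y
      rw [Real.norm_eq_abs, abs_of_nonneg (hVb y).1]
      exact (hVb y).2
    have hgint : Integrable (fun y => |V y - V (f z)|) μ :=
      (hVint.sub (integrable_const _)).abs
    have hdiff : (∫ y, V y ∂μ) - V (f z) = ∫ y, (V y - V (f z)) ∂μ := by
      rw [integral_sub hVint (integrable_const _), integral_const]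
      simp
    have habs : |(∫ y, V y ∂μ) - V (f z)| ≤ 2 * ε * L * q z + M * (1 - q z) := by
      rw [hdiff]
      calc |∫ y, (V y - V (f z)) ∂μ| ≤ ∫ y, |V y - V (f z)| ∂μ :=
            by simpa [Real.norm_eq_abs] using norm_integral_le_integral_norm (fun y => V y - V (f z))
        _ = (∫ y in B, |V y - V (f z)| ∂μ) + ∫ y in Bᶜ, |V y - V (f z)| ∂μ :=
            (integral_add_compl hBm hgint).symm
        _ ≤ 2 * ε * L * q z + M * (1 - q z) := by
            gcongr
            · calc (∫ y in B, |V y - V (f z)| ∂μ) ≤ ∫ _y in B, L * (2 * ε) ∂μ := by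
                    refine setIntegral_mono_on hgint.integrableOn (integrableOn_const ?_) hBm ?_
                    · exact (measure_lt_top _ _).ne
                    · intro y hy
                      refine (hz y hy).trans ?_
                      have : ‖y - f z‖ ≤ 2 * ε := by
                        simpa [hB, dist_eq_norm] using hy
                      exact mul_le_mul_of_nonneg_left this hL
              _ = 2 * ε * L * q z := by
                    rw [setIntegral_const]; simp [q, smul_eq_mul, Measure.real]; ring
            · calc (∫ y in Bᶜ, |V y - V (f z)| ∂μ) ≤ ∫ _y in Bᶜ, M ∂μ := by
                    refine setIntegral_mono_on hgint.integrableOn (integrableOn_const ?_) hBm.compl ?_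
                    · exact (measure_lt_top _ _).ne
                    · intro y _
                      rw [abs_sub_le_iff]
                      constructor
                      · linarith [(hVb y).2, (hVb (f z)).1]
                      · linarith [(hVb (f z)).2, (hVb y).1]
              _ = M * (1 - q z) := by
                    rw [setIntegral_const, smul_eq_mul]
                    have : μ Bᶜ = 1 - μ B := prob_compl_eq_one_sub hBm
                    rw [Measure.real, this, ENNReal.toReal_sub_of_le prob_le_one ENNReal.one_ne_top]
                    simp [q]
                    ring
    have hq0 := (hq01 z).1
    have hq1 := (hq01 z).2
    have hrhs : 0 ≤ 2 * ε * L * q z + M * (1 - q z) := by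
      have := mul_nonneg (mul_nonneg (by linarith [hε.le] : (0:ℝ) ≤ 2 * ε) hL) hq0
      have := mul_nonneg hM (by linarith : (0:ℝ) ≤ 1 - q z)
      linarith
    have hsq : ((∫ y, V y ∂μ) - V (f z)) ^ 2 ≤ (2 * ε * L * q z + M * (1 - q z)) ^ 2 := by
      rw [← sq_abs]
      exact pow_le_pow_left₀ (abs_nonneg _) habs 2
    refine hsq.trans ?_
    nlinarith [mul_nonneg (mul_nonneg hq0 (by linarith : (0:ℝ) ≤ 1 - q z)) (sq_nonneg (2 * ε * L - M))]
  -- integrate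
  have hqint : Integrable q ρ := by
    refine Integrable.mono' (integrable_const 1) hqm.aestronglyMeasurable ?_
    filter_upwards with z
    rw [Real.norm_eq_abs, abs_of_nonneg (hq01 z).1]
    exact (hq01 z).2
  have hrhsint : Integrable (fun z => 4 * ε ^ 2 * L ^ 2 * q z + M ^ 2 * (1 - q z)) ρ :=
    (hqint.const_mul _).add (((integrable_const 1).sub hqint).const_mul _)
  have hmono : ∫ z, ((∫ y, V y ∂(κ z)) - V (f z)) ^ 2 ∂ρ
      ≤ ∫ z, (4 * ε ^ 2 * L ^ 2 * q z + M ^ 2 * (1 - q z)) ∂ρ := by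
    refine integral_mono_of_nonneg ?_ hrhsint hpt
    filter_upwards with z
    exact sq_nonneg _
  refine hmono.trans_eq ?_
  have hint1 : Integrable (fun z => 4 * ε ^ 2 * L ^ 2 * q z) ρ := hqint.const_mul _
  have hint2 : Integrable (fun z => M ^ 2 * (1 - q z)) ρ :=
    ((integrable_const 1).sub hqint).const_mul _
  have h1 : ∫ z, 4 * ε ^ 2 * L ^ 2 * q z ∂ρ = 4 * ε ^ 2 * L ^ 2 * p := by
    rw [integral_const_mul, hp]
  have h2 : ∫ z, M ^ 2 * (1 - q z) ∂ρ = M ^ 2 * (1 - p) := by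
    rw [integral_const_mul, integral_sub (integrable_const 1) hqint, integral_const, hp]
    simp
  rw [integral_add hint1 hint2, h1, h2]
end

section
/- Let S = ℝⁿ be a state space with Euclidean norm, A a nonempty measurable action space, Z = S × A, ρ a probability measure on Z, f : Z → S a measurable deterministic environment transition, κ a Markov kernel from Z to S (a learned transition model), r : Z → ℝ a measurable reward, γ ∈ [0,1) a discount factor, and R_max > 0. Let Q : S × A → ℝ be measurable with 0 ≤ Q(s,a) ≤ R_max/(1−γ) for all (s,a), and suppose V(s) = sup_{a ∈ A} Q(s,a) is measurable. Assume that, for ρ-almost every (s,a) ∈ Z, for every action a′ ∈ A the map s′ ↦ Q(s′,a′) is Lipschitz with constant L on the closed ball of radius 2ε centered at f(s,a), where ε > 0 and L ≥ 0. Define the optimal Bellman operator under the deterministic environment by (𝒯*Q)(s,a) = r(s,a) + γ V(f(s,a)) and the model-induced optimal Bellman operator by (𝒯̂*Q)(s,a) = r(s,a) + γ ∫ V d(κ(s,a)). Then, with p = ∫_Z κ(s,a)({s′ : ‖s′ − f(s,a)‖₂ ≤ 2ε}) dρ(s,a), one has ∫_Z |(𝒯*Q)(s,a) − (𝒯̂*Q)(s,a)|²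 dρ(s,a) ≤ γ² [ 4ε²L²·p + (R_max/(1−γ))²·(1 − p) ]. -/
open MeasureTheory ProbabilityTheory

/-- Finite-sample-free form of the value-aware model error bound for the optimal Bellman
operators induced by a deterministic environment `f` and a learned transition model `κ`,
under a local Lipschitz condition on the state-action value function `Q`. -/
theorem bellman_value_aware_model_error_split
    {n : ℕ} {A : Type*} [MeasurableSpace A] [Nonempty A]
    (ρ : Measure (EuclideanSpace ℝ (Fin n) × A)) [IsProbabilityMeasure ρ]
    (f : EuclideanSpace ℝ (Fin n) × A → EuclideanSpace ℝ (Fin n)) (hf : Measurable f)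
    (κ : Kernel (EuclideanSpace ℝ (Fin n) × A) (EuclideanSpace ℝ (Fin n)))
    [IsMarkovKernel κ]
    (r : EuclideanSpace ℝ (Fin n) × A → ℝ) (hr : Measurable r)
    (γ : ℝ) (hγ0 : 0 ≤ γ) (hγ1 : γ < 1)
    (Rmax : ℝ) (hRmax : 0 < Rmax)
    (Q : EuclideanSpace ℝ (Fin n) × A → ℝ) (hQ : Measurable Q)
    (hQb : ∀ z, 0 ≤ Q z ∧ Q z ≤ Rmax / (1 - γ))
    (V : EuclideanSpace ℝ (Fin n) → ℝ)
    (hV : ∀ s, V s = ⨆ a : A, Q (s, a)) (hVmeas : Measurable V)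
    (ε L : ℝ) (hε : 0 < ε) (hL : 0 ≤ L)
    (hLip : ∀ᵐ z ∂ρ, ∀ a' : A,
      ∀ y₁ ∈ Metric.closedBall (f z) (2 * ε), ∀ y₂ ∈ Metric.closedBall (f z) (2 * ε),
        |Q (y₁, a') - Q (y₂, a')| ≤ L * ‖y₁ - y₂‖)
    (T That : EuclideanSpace ℝ (Fin n) × A → ℝ)
    (hT : ∀ z, T z = r z + γ * V (f z))
    (hThat : ∀ z, That z = r z + γ * ∫ s', V s' ∂(κ z))
    (p : ℝ)
    (hp : p = ∫ z, ((κ z) (Metric.closedBall (f z) (2 * ε))).toReal ∂ρ) :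
    ∫ z, |T z - That z| ^ 2 ∂ρ
      ≤ γ ^ 2 * (4 * ε ^ 2 * L ^ 2 * p + (Rmax / (1 - γ)) ^ 2 * (1 - p)) := by
  set M : ℝ := Rmax / (1 - γ) with hM
  have hM0 : 0 < M := div_pos hRmax (by linarith)
  -- bounds on V
  have hbdd : ∀ s : EuclideanSpace ℝ (Fin n), BddAbove (Set.range fun a : A => Q (s, a)) := fun s =>
    ⟨M, by rintro x ⟨a, rfl⟩; exact (hQb (s, a)).2⟩
  have hVub : ∀ s : EuclideanSpace ℝ (Fin n), V s ≤ M := fun s => by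
    rw [hV]; exact ciSup_le fun a => (hQb (s, a)).2
  have hVlb : ∀ s : EuclideanSpace ℝ (Fin n), 0 ≤ V s := fun s => by
    rw [hV]
    obtain ⟨a⟩ := ‹Nonempty A›
    exact le_trans (hQb (s, a)).1 (le_ciSup (hbdd s) a)
  -- measurability of z ↦ κ z (closedBall (f z) (2ε))
  set g : EuclideanSpace ℝ (Fin n) × A → ℝ := fun z => ((κ z) (Metric.closedBall (f z) (2 * ε))).toReal with hg
  have htmeas : MeasurableSet {q : (EuclideanSpace ℝ (Fin n) × A) × EuclideanSpace ℝ (Fin n) | dist q.2 (f q.1) ≤ 2 * ε} :=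
    measurableSet_le (measurable_snd.dist (hf.comp measurable_fst)) measurable_const
  have hgmeas : Measurable g := by
    have h := (Kernel.measurable_kernel_prodMk_left (κ := κ) htmeas).ennreal_toReal
    have he : ∀ z : EuclideanSpace ℝ (Fin n) × A,
        (Prod.mk z ⁻¹' {q : (EuclideanSpace ℝ (Fin n) × A) × EuclideanSpace ℝ (Fin n) |
          dist q.2 (f q.1) ≤ 2 * ε}) = Metric.closedBall (f z) (2 * ε) := by
      intro z; ext s'; simp [Metric.mem_closedBall]
    simpa [hg, he] using h
  have hg01 : ∀ z, 0 ≤ g z ∧ g z ≤ 1 := by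
    intro z
    constructor
    · exact ENNReal.toReal_nonneg
    · have h1 : (κ z) (Metric.closedBall (f z) (2 * ε)) ≤ 1 := prob_le_one
      simpa using ENNReal.toReal_mono (by norm_num) h1
  have hgint : Integrable g ρ := by
    refine Integrable.mono' (integrable_const 1) hgmeas.aestronglyMeasurable ?_
    filter_upwards with z
    rw [Real.norm_eq_abs, abs_of_nonneg (hg01 z).1]
    exact (hg01 z).2
  -- pointwise a.e. bound
  have hpt : ∀ᵐ z ∂ρ, |T z - That z| ^ 2
      ≤ γ ^ 2 * (4 * ε ^ 2 * L ^ 2 * g z + M ^ 2 * (1 - g z)) := by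
    filter_upwards [hLip] with z hz
    set μ := κ z
    set B := Metric.closedBall (f z) (2 * ε) with hB
    have hBmeas : MeasurableSet B := measurableSet_closedBall
    have hfzB : f z ∈ B := Metric.mem_closedBall_self (by positivity)
    have hVint : Integrable V μ := by
      refine Integrable.mono' (integrable_const M) hVmeas.aestronglyMeasurable ?_
      filter_upwards with s'
      rw [Real.norm_eq_abs, abs_of_nonneg (hVlb s')]
      exact hVub s'
    -- Lipschitz property of V on the ball
    have hVLip : ∀ s' ∈ B, |V (f z) - V s'| ≤ 2 * ε * L := by
      intro s' hs'
      have key : ∀ y₁ ∈ B, ∀ y₂ ∈ B, V y₁ - V y₂ ≤ L * ‖y₁ - y₂‖ := by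
        intro y₁ hy₁ y₂ hy₂
        rw [sub_le_iff_le_add, hV y₁]
        refine ciSup_le fun a => ?_
        have h1 := hz a y₁ hy₁ y₂ hy₂
        have h2 : Q (y₂, a) ≤ V y₂ := by rw [hV]; exact le_ciSup (hbdd y₂) a
        have := abs_le.mp h1
        linarith [this.2]
      have hnorm : ‖f z - s'‖ ≤ 2 * ε := by
        rw [← dist_eq_norm]
        rw [Metric.mem_closedBall] at hs'
        rwa [dist_comm]
      have h1 := key (f z) hfzB s' hs'
      have h2 := key s' hs' (f z) hfzB
      rw [abs_le]
      constructor
      · rw [norm_sub_rev] at h1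
        nlinarith [norm_nonneg (s' - f z),
          mul_le_mul_of_nonneg_left (by rwa [norm_sub_rev] : ‖s' - f z‖ ≤ 2 * ε) hL]
      · nlinarith [norm_nonneg (f z - s'), mul_le_mul_of_nonneg_left hnorm hL]
    -- |T z - That z| ≤ γ * (2εL * g z + M * (1 - g z))
    have hμBc : (μ Bᶜ).toReal = 1 - g z := by
      rw [prob_compl_eq_one_sub hBmeas, ENNReal.toReal_sub_of_le prob_le_one (by norm_num)]
      simp [hg]
      rfl
    have habs : |T z - That z| ≤ γ * (2 * ε * L * g z + M * (1 - g z)) := by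
      have e1 : T z - That z = γ * ∫ s', (V (f z) - V s') ∂μ := by
        rw [hT, hThat, integral_sub (integrable_const _) hVint, integral_const]
        simp [measure_univ]
        ring
      rw [e1, abs_mul, abs_of_nonneg hγ0]
      refine mul_le_mul_of_nonneg_left ?_ hγ0
      calc |∫ s', (V (f z) - V s') ∂μ| ≤ ∫ s', |V (f z) - V s'| ∂μ := by
            simpa [Real.norm_eq_abs] using
              norm_integral_le_integral_norm (μ := μ) (f := fun s' => V (f z) - V s')
        _ ≤ ∫ s', (B.indicator (fun _ => 2 * ε * L) s' + Bᶜ.indicator (fun _ => M) s') ∂μ := by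
            refine integral_mono ?_ ?_ ?_
            · refine Integrable.mono' (integrable_const M)
                ((measurable_const.sub hVmeas).abs.aestronglyMeasurable) ?_
              filter_upwards with s'
              rw [Real.norm_eq_abs, abs_abs, abs_le]
              constructor <;> nlinarith [hVlb s', hVub s', hVlb (f z), hVub (f z)]
            · exact ((integrable_const _).indicator hBmeas).add
                ((integrable_const _).indicator hBmeas.compl)
            · intro s'
              dsimp only
              by_cases hs' : s' ∈ B
              · rw [Set.indicator_of_mem hs', Set.indicator_of_notMem (by simpa using hs')]
                simpa using hVLip s' hs'
              · rw [Set.indicator_of_notMem hs', Set.indicator_of_mem (by simpa using hs')]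
                rw [zero_add, abs_le]
                constructor <;> nlinarith [hVlb s', hVub s', hVlb (f z), hVub (f z)]
        _ = 2 * ε * L * g z + M * (1 - g z) := by
            rw [integral_add ((integrable_const _).indicator hBmeas)
              ((integrable_const _).indicator hBmeas.compl),
              integral_indicator_const _ hBmeas, integral_indicator_const _ hBmeas.compl,
              measureReal_def, measureReal_def, hμBc]
            simp only [smul_eq_mul, hg]
            ring
    -- square the bound
    have h0 : 0 ≤ |T z - That z| := abs_nonneg _
    have hgz := hg01 z
    have hrnn : (0:ℝ) ≤ γ * (2 * ε * L * g z + M * (1 - g z)) :=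
      mul_nonneg hγ0 (add_nonneg (mul_nonneg (by positivity) hgz.1)
        (mul_nonneg hM0.le (sub_nonneg.mpr hgz.2)))
    nlinarith [mul_le_mul habs habs h0 hrnn,
      mul_nonneg (sq_nonneg γ) (mul_nonneg (mul_nonneg hgz.1 (sub_nonneg.mpr hgz.2))
        (sq_nonneg (2 * ε * L - M)))]
  -- integrate
  have hrhsint : Integrable (fun z => γ ^ 2 * (4 * ε ^ 2 * L ^ 2 * g z + M ^ 2 * (1 - g z))) ρ :=
    (((hgint.const_mul _).add (((integrable_const 1).sub hgint).const_mul _)).const_mul _)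
  calc ∫ z, |T z - That z| ^ 2 ∂ρ
      ≤ ∫ z, γ ^ 2 * (4 * ε ^ 2 * L ^ 2 * g z + M ^ 2 * (1 - g z)) ∂ρ := by
        refine integral_mono_of_nonneg ?_ hrhsint hpt
        filter_upwards with z
        exact pow_nonneg (abs_nonneg _) 2
    _ = γ ^ 2 * (4 * ε ^ 2 * L ^ 2 * p + M ^ 2 * (1 - p)) := by
        have e : (fun z => γ ^ 2 * (4 * ε ^ 2 * L ^ 2 * g z + M ^ 2 * (1 - g z)))
            = fun z => (γ ^ 2 * (4 * ε ^ 2 * L ^ 2 - M ^ 2)) * g z + γ ^ 2 * M ^ 2 := by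
          funext z; ring
        have hpg : ∫ z, g z ∂ρ = p := by rw [hp]
        rw [e, integral_add (hgint.const_mul _) (integrable_const _), integral_const_mul,
          integral_const, probReal_univ, hpg]
        simp only [ENNReal.toReal_one, smul_eq_mul, one_mul]
        ring
end
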